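/- arXiv:1102.4031 — 2 statements merged into one kernel-verified Lean document; each statement's English description precedes it below -/
import Mathlib

section
/- Let H be a 2g-dimensional vector space with non-degenerate alternating form S, and let H' ⊆ H be the span of a₁,b₁,…,a_h,b_h from a symplectic basis, with ω' = Σⱼ₌₁ʰ aⱼ∧bⱼ. With c the contraction c(x∧y∧z) = S(y,z)x + S(z,x)y + S(x,y)z, one has Σⱼ₌₁ʰ S(c(aⱼ∧ω'), c(bⱼ∧ω')) = (h-1)² · h, and hence (8/(2h-2)) · Σⱼ₌₁ʰ S(c(aⱼ∧ω'), c(bⱼ∧ω')) = 4h(h-1) for h ≥ 2. -/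
open ExteriorAlgebra

/-- with `H' = span(a₁,b₁,…,a_h,b_h)` and `ω' = Σⱼ₌₁ʰ aⱼ∧bⱼ`, the contraction
`c(x∧y∧z) = S(y,z)x + S(z,x)y + S(x,y)z` satisfies
`Σⱼ₌₁ʰ S(c(aⱼ∧ω'), c(bⱼ∧ω')) = (h-1)²·h`, hence
`(8/(2h-2))·Σⱼ S(c(aⱼ∧ω'), c(bⱼ∧ω')) = 4h(h-1)` for `h ≥ 2`. -/
theorem contraction_heisenberg_sum
    (g h : ℕ) (hh : h ≤ g)
    (H : Type*) [AddCommGroup H] [Module ℚ H] [FiniteDimensional ℚ H]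
    (hdim : Module.finrank ℚ H = 2 * g)
    (S : H →ₗ[ℚ] H →ₗ[ℚ] ℚ)
    (halt : ∀ x : H, S x x = 0)
    (hnd : ∀ x : H, (∀ y : H, S x y = 0) → x = 0)
    (a b : Fin g → H)
    (hab : ∀ i j, S (a i) (b j) = if i = j then 1 else 0)
    (haa : ∀ i j, S (a i) (a j) = 0)
    (hbb : ∀ i j, S (b i) (b j) = 0)
    (c : ExteriorAlgebra ℚ H →ₗ[ℚ] H)
    (hc : ∀ x y z : H,
      c (ι ℚ x * ι ℚ y * ι ℚ z) = S y z • x + S z x • y + S x y • z)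
    (ω' : ExteriorAlgebra ℚ H)
    (hω' : ω' = ∑ j : Fin h, ι ℚ (a (Fin.castLE hh j)) * ι ℚ (b (Fin.castLE hh j))) :
    (∑ j : Fin h, S (c (ι ℚ (a (Fin.castLE hh j)) * ω'))
        (c (ι ℚ (b (Fin.castLE hh j)) * ω')) = ((h : ℚ) - 1) ^ 2 * h) ∧
    (2 ≤ h →
      (8 / (2 * (h : ℚ) - 2)) * ∑ j : Fin h, S (c (ι ℚ (a (Fin.castLE hh j)) * ω'))
        (c (ι ℚ (b (Fin.castLE hh j)) * ω')) = 4 * (h : ℚ) * ((h : ℚ) - 1)) := by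
  -- antisymmetry of S
  have hskew : ∀ x y : H, S x y = - S y x := by
    intro x y
    have h0 := halt (x + y)
    simp only [map_add, LinearMap.add_apply, halt x, halt y] at h0
    linarith
  have hba : ∀ i j : Fin g, S (b i) (a j) = if j = i then -1 else 0 := by
    intro i j
    rw [hskew, hab]
    split_ifs <;> norm_num
  -- castLE injectivity
  have hinj : ∀ j k : Fin h, (Fin.castLE hh j = Fin.castLE hh k) ↔ j = k := by
    intro j k
    constructor
    · intro e; exact Fin.castLE_injective hh e
    · rintro rfl; rfl
  -- key: per-term contraction values
  have hca : ∀ j : Fin h,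
      c (ι ℚ (a (Fin.castLE hh j)) * ω') = ((h : ℚ) - 1) • a (Fin.castLE hh j) := by
    intro j
    rw [hω', Finset.mul_sum, map_sum]
    have hterm : ∀ k : Fin h,
        c (ι ℚ (a (Fin.castLE hh j)) *
            (ι ℚ (a (Fin.castLE hh k)) * ι ℚ (b (Fin.castLE hh k)))) =
          (if j = k then (0 : ℚ) else 1) • a (Fin.castLE hh j) := by
      intro k
      rw [← mul_assoc, hc, hab, haa, hba]
      simp only [hinj]
      by_cases e : j = k
      · subst e; simp
      · simp [e]
    rw [Finset.sum_congr rfl fun k _ => hterm k, ← Finset.sum_smul]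
    congr 1
    have : ∀ k : Fin h, (if j = k then (0:ℚ) else 1) = 1 - (if j = k then 1 else 0) := by
      intro k; split_ifs <;> ring
    rw [Finset.sum_congr rfl fun k _ => this k, Finset.sum_sub_distrib,
      Finset.sum_const, Finset.sum_ite_eq]
    simp
  have hcb : ∀ j : Fin h,
      c (ι ℚ (b (Fin.castLE hh j)) * ω') = ((h : ℚ) - 1) • b (Fin.castLE hh j) := by
    intro j
    rw [hω', Finset.mul_sum, map_sum]
    have hterm : ∀ k : Fin h,
        c (ι ℚ (b (Fin.castLE hh j)) *
            (ι ℚ (a (Fin.castLE hh k)) * ι ℚ (b (Fin.castLE hh k)))) =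
          (if j = k then (0 : ℚ) else 1) • b (Fin.castLE hh j) := by
      intro k
      rw [← mul_assoc, hc, hab, hbb, hba]
      simp only [hinj]
      by_cases e : j = k
      · subst e; simp
      · have e' : ¬ k = j := fun hkj => e hkj.symm
        simp [e, e']
    rw [Finset.sum_congr rfl fun k _ => hterm k, ← Finset.sum_smul]
    congr 1
    have : ∀ k : Fin h, (if j = k then (0:ℚ) else 1) = 1 - (if j = k then 1 else 0) := by
      intro k; split_ifs <;> ring
    rw [Finset.sum_congr rfl fun k _ => this k, Finset.sum_sub_distrib,
      Finset.sum_const, Finset.sum_ite_eq]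
    simp
  have hsum : ∑ j : Fin h, S (c (ι ℚ (a (Fin.castLE hh j)) * ω'))
      (c (ι ℚ (b (Fin.castLE hh j)) * ω')) = ((h : ℚ) - 1) ^ 2 * h := by
    have : ∀ j : Fin h, S (c (ι ℚ (a (Fin.castLE hh j)) * ω'))
        (c (ι ℚ (b (Fin.castLE hh j)) * ω')) = ((h : ℚ) - 1) ^ 2 := by
      intro j
      rw [hca, hcb]
      simp only [map_smul, LinearMap.smul_apply, smul_eq_mul, hab, if_pos rfl]
      simp only [if_true]
      ring
    rw [Finset.sum_congr rfl fun j _ => this j, Finset.sum_const]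
    simp [mul_comm]
  refine ⟨hsum, fun h2 => ?_⟩
  rw [hsum]
  have hne : 2 * (h : ℚ) - 2 ≠ 0 := by
    have : (2 : ℚ) ≤ (h : ℚ) := by exact_mod_cast h2
    intro e; nlinarith
  field_simp
  ring
end

section
/- With notation as above (symplectic (H,S_H) of dimension 2g, g ≥ 2), define S_L on Λ³H by S_L(x₁∧x₂∧x₃,y₁∧y₂∧y₃) = det(S_H(xᵢ,yⱼ)), define S_V on V = Λ³H/(ω∧H) by S_V(u,v) = (g-1)·S_L(j(u), j(v)) where j is the canonical splitting, and pull back S_H along the contraction c : Λ³H → H. Then c*S_H + p*S_V = (g-1)·S_L as bilinear forms on Λ³H. -/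
open ExteriorAlgebra

/-- The decomposable element `x ∧ y ∧ z` of the third exterior power. -/
noncomputable def wedge3 {H : Type*} [AddCommGroup H] [Module ℚ H] (x y z : H) :
    ⋀[ℚ]^3 H :=
  ⟨ExteriorAlgebra.ιMulti ℚ 3 ![x, y, z],
    ExteriorAlgebra.ιMulti_range ℚ 3 (Set.mem_range_self _)⟩

lemma ppr_ext3 {H : Type*} [AddCommGroup H] [Module ℚ H]
    (f k : (⋀[ℚ]^3 H) →ₗ[ℚ] ℚ)
    (h : ∀ x y z : H, f (wedge3 x y z) = k (wedge3 x y z)) :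
    ∀ ξ : ⋀[ℚ]^3 H, f ξ = k ξ := by
  intro ξ
  have hmem : (ξ : ExteriorAlgebra ℚ H) ∈
      Submodule.span ℚ (Set.range (ιMulti ℚ 3 (M := H))) := by
    rw [ιMulti_span_fixedDegree]; exact ξ.2
  have main : ∀ x (hx : x ∈ Submodule.span ℚ (Set.range (ιMulti ℚ 3 (M := H)))),
      ∃ hx' : x ∈ ⋀[ℚ]^3 H, f ⟨x, hx'⟩ = k ⟨x, hx'⟩ := by
    intro x hx
    induction hx using Submodule.span_induction with
    | mem x hx =>
      obtain ⟨v, rfl⟩ := hx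
      have hv : ![v 0, v 1, v 2] = v := by
        funext i; fin_cases i <;> rfl
      refine ⟨ιMulti_range ℚ 3 (Set.mem_range_self _), ?_⟩
      have := h (v 0) (v 1) (v 2)
      simpa only [wedge3, hv] using this
    | zero =>
      refine ⟨Submodule.zero_mem _, ?_⟩
      have : (⟨0, Submodule.zero_mem _⟩ : ⋀[ℚ]^3 H) = 0 := rfl
      rw [this, map_zero, map_zero]
    | add x y hx hy ihx ihy =>
      obtain ⟨hx', hfx⟩ := ihx
      obtain ⟨hy', hfy⟩ := ihy
      refine ⟨Submodule.add_mem _ hx' hy', ?_⟩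
      have : (⟨x + y, Submodule.add_mem _ hx' hy'⟩ : ⋀[ℚ]^3 H)
          = ⟨x, hx'⟩ + ⟨y, hy'⟩ := rfl
      rw [this, map_add, map_add, hfx, hfy]
    | smul r x hx ihx =>
      obtain ⟨hx', hfx⟩ := ihx
      refine ⟨Submodule.smul_mem _ r hx', ?_⟩
      have : (⟨r • x, Submodule.smul_mem _ r hx'⟩ : ⋀[ℚ]^3 H)
          = r • (⟨x, hx'⟩ : ⋀[ℚ]^3 H) := rfl
      rw [this, map_smul, map_smul, hfx]
  obtain ⟨hx', hfk⟩ := main ξ hmem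
  have : (⟨(ξ : ExteriorAlgebra ℚ H), hx'⟩ : ⋀[ℚ]^3 H) = ξ := Subtype.ext rfl
  rwa [this] at hfk

section Aux
variable {g : ℕ} {H : Type*} [AddCommGroup H] [Module ℚ H] [FiniteDimensional ℚ H]
  (hdim : Module.finrank ℚ H = 2 * g)
  (S : H →ₗ[ℚ] H →ₗ[ℚ] ℚ)
  (halt : ∀ x : H, S x x = 0)
  (hnd : ∀ x : H, (∀ y : H, S x y = 0) → x = 0)
  (a b : Fin g → H)
  (hab : ∀ i j, S (a i) (b j) = if i = j then 1 else 0)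
  (haa : ∀ i j, S (a i) (a j) = 0)
  (hbb : ∀ i j, S (b i) (b j) = 0)

omit [FiniteDimensional ℚ H] in
include halt in
lemma ppr_skew : ∀ x y : H, S x y = - S y x := by
  intro x y
  have h := halt (x + y)
  simp only [map_add, LinearMap.add_apply, halt] at h
  linarith

include hdim halt hnd hab haa hbb in
lemma ppr_rep : ∀ x : H, (∑ j, S x (b j) • a j) - ∑ j, S x (a j) • b j = x := by
  have hba : ∀ i j, S (b i) (a j) = if i = j then -1 else 0 := by
    intro i j
    rw [ppr_skew S halt, hab]
    split <;> simp_all [eq_comm]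
  intro x
  set d : H := x - ((∑ j, S x (b j) • a j) - ∑ j, S x (a j) • b j) with hd
  have hda : ∀ i, S (a i) d = 0 := by
    intro i
    simp only [hd, map_sub, map_sum, map_smul, haa, hab, smul_eq_mul, mul_zero,
      Finset.sum_const_zero, mul_ite, mul_one, mul_zero, Finset.sum_ite_eq', Finset.sum_ite_eq,
      Finset.mem_univ, if_true]
    rw [ppr_skew S halt x (a i)]; ring
  have hdb : ∀ i, S (b i) d = 0 := by
    intro i
    simp only [hd, map_sub, map_sum, map_smul, hbb, hba, smul_eq_mul, mul_zero,
      Finset.sum_const_zero, mul_ite, mul_neg, mul_one, mul_zero, Finset.sum_ite_eq',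
      Finset.sum_ite_eq, Finset.mem_univ, if_true]
    rw [ppr_skew S halt x (b i)]; ring
  have hli : LinearIndependent ℚ (Sum.elim a b) := by
    rw [Fintype.linearIndependent_iff]
    intro co h i
    have key : ∀ u : H, ∑ j, co (Sum.inl j) * S (a j) u + ∑ j, co (Sum.inr j) * S (b j) u = 0 := by
      intro u
      have := congrArg (fun v => S v u) h
      simpa [Fintype.sum_sum_type, map_sum, map_smul] using this
    match i with
    | Sum.inl i₀ =>
      have := key (b i₀)
      simpa [hab, hbb, mul_ite, Finset.sum_ite_eq', Finset.mem_univ] using this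
    | Sum.inr i₀ =>
      have := key (a i₀)
      have h2 : ∑ j, co (Sum.inr j) * S (b j) (a i₀) = - co (Sum.inr i₀) := by
        simp [hba, mul_ite, Finset.sum_ite_eq', Finset.mem_univ]
      simp only [haa, mul_zero, Finset.sum_const_zero, zero_add, h2] at this
      linarith
  have hsp : Submodule.span ℚ (Set.range (Sum.elim a b)) = ⊤ := by
    apply hli.span_eq_top_of_card_eq_finrank'
    simp [hdim, two_mul]
  have hyd : ∀ y : H, S y d = 0 := by
    intro y
    have hy : y ∈ Submodule.span ℚ (Set.range (Sum.elim a b)) := by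
      rw [hsp]; trivial
    induction hy using Submodule.span_induction with
    | mem x hx =>
      obtain ⟨i, rfl⟩ := hx
      match i with
      | Sum.inl i => exact hda i
      | Sum.inr i => exact hdb i
    | zero => simp
    | add x y _ _ ihx ihy => simp [map_add, ihx, ihy]
    | smul r x _ ihx => simp [map_smul, ihx]
  have : d = 0 := by
    apply hnd
    intro y
    rw [ppr_skew S halt, hyd, neg_zero]
  rw [hd] at this
  exact (sub_eq_zero.mp this).symm

include hdim halt hnd hab haa hbb in
lemma ppr_K : ∀ x y : H,
    ∑ j, (S x (a j) * S y (b j) - S x (b j) * S y (a j)) = S x y := by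
  intro x y
  have h := congrArg (S x) (ppr_rep hdim S halt hnd a b hab haa hbb y)
  simp only [map_sub, map_sum, map_smul, smul_eq_mul] at h
  rw [← h, ← Finset.sum_sub_distrib]
  exact Finset.sum_congr rfl fun j _ => by ring

end Aux

/-- `c^*S_H + p^*S_V = (g-1)·S_L` on `Λ³H`, where
`S_L(x₁∧x₂∧x₃, y₁∧y₂∧y₃) = det(S_H(xᵢ,yⱼ))`, `S_V(u,v) = (g-1)·S_L(j(u), j(v))` on
`V = Λ³H/(ω∧H)`, `c` is the contraction, `p` the quotient map and
`j(p(ξ)) = ξ - ω∧c(ξ)/(g-1)` the canonical splitting. -/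
theorem pullback_polarization_relation
    (g : ℕ) (hg : 2 ≤ g)
    (H : Type*) [AddCommGroup H] [Module ℚ H] [FiniteDimensional ℚ H]
    (hdim : Module.finrank ℚ H = 2 * g)
    (S : H →ₗ[ℚ] H →ₗ[ℚ] ℚ)
    (halt : ∀ x : H, S x x = 0)
    (hnd : ∀ x : H, (∀ y : H, S x y = 0) → x = 0)
    (a b : Fin g → H)
    (hab : ∀ i j, S (a i) (b j) = if i = j then 1 else 0)
    (haa : ∀ i j, S (a i) (a j) = 0)
    (hbb : ∀ i j, S (b i) (b j) = 0)
    (c : (⋀[ℚ]^3 H) →ₗ[ℚ] H)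
    (hc : ∀ x y z : H, c (wedge3 x y z) = S y z • x + S z x • y + S x y • z)
    (w : H →ₗ[ℚ] ⋀[ℚ]^3 H)
    (hw : ∀ u : H, w u = ∑ j, wedge3 (a j) (b j) u)
    (SL : (⋀[ℚ]^3 H) →ₗ[ℚ] (⋀[ℚ]^3 H) →ₗ[ℚ] ℚ)
    (hSL : ∀ x₁ x₂ x₃ y₁ y₂ y₃ : H,
      SL (wedge3 x₁ x₂ x₃) (wedge3 y₁ y₂ y₃)
        = Matrix.det (Matrix.of fun i j => S (![x₁, x₂, x₃] i) (![y₁, y₂, y₃] j)))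
    (jm : ((⋀[ℚ]^3 H) ⧸ LinearMap.range w) →ₗ[ℚ] ⋀[ℚ]^3 H)
    (hjm : ∀ ξ : ⋀[ℚ]^3 H,
      jm ((LinearMap.range w).mkQ ξ) = ξ - ((g : ℚ) - 1)⁻¹ • w (c ξ)) :
    ∀ ξ η : ⋀[ℚ]^3 H,
      S (c ξ) (c η)
        + ((g : ℚ) - 1) * SL (jm ((LinearMap.range w).mkQ ξ))
            (jm ((LinearMap.range w).mkQ η))
      = ((g : ℚ) - 1) * SL ξ η := by
  have hskew := ppr_skew S halt
  have hK := ppr_K hdim S halt hnd a b hab haa hbb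
  have hG : ((g : ℚ) - 1) ≠ 0 := by
    have : (2 : ℚ) ≤ (g : ℚ) := by exact_mod_cast hg
    linarith
  -- A3 : c ∘ w = (g-1) • id
  have hA3 : ∀ u : H, c (w u) = ((g : ℚ) - 1) • u := by
    intro u
    rw [hw, map_sum]
    simp only [hc]
    rw [Finset.sum_add_distrib, Finset.sum_add_distrib]
    have h1 : ∑ j, S (a j) (b j) • u = (g : ℚ) • u := by
      simp [hab, Nat.cast_smul_eq_nsmul]
    have h2 : ∑ j, S (b j) u • a j = - ∑ j, S u (b j) • a j := by
      rw [← Finset.sum_neg_distrib]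
      exact Finset.sum_congr rfl fun j _ => by rw [hskew (b j) u, neg_smul]
    have hr := ppr_rep hdim S halt hnd a b hab haa hbb u
    have h4 : ((g : ℚ) - 1) • u
        = (g : ℚ) • u - ((∑ j, S u (b j) • a j) - ∑ j, S u (a j) • b j) := by
      rw [hr, sub_smul, one_smul]
    rw [h1, h2, h4]
    abel
  -- A1 : SL ξ (w u) = S (c ξ) u
  have hA1 : ∀ (u : H) (ξ : ⋀[ℚ]^3 H), SL ξ (w u) = S (c ξ) u := by
    intro u
    have := ppr_ext3 (SL.flip (w u)) ((S.flip u).comp c) ?_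
    · intro ξ
      have h := this ξ
      simpa using h
    · intro x y z
      simp only [LinearMap.flip_apply, LinearMap.comp_apply]
      rw [hw, map_sum, hc]
      simp only [map_add, map_smul, LinearMap.add_apply, LinearMap.smul_apply, smul_eq_mul]
      simp only [hSL, Matrix.det_fin_three, Matrix.of_apply, Matrix.cons_val_zero,
        Matrix.cons_val_one, Matrix.head_cons, Matrix.cons_val_two, Matrix.tail_cons]
      rw [← hK y z, ← hK z x, ← hK x y, Finset.sum_mul, Finset.sum_mul, Finset.sum_mul,
        ← Finset.sum_add_distrib, ← Finset.sum_add_distrib]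
      exact Finset.sum_congr rfl fun j _ => by ring
  -- A2 : SL (w u) η = - S (c η) u
  have hA2 : ∀ (u : H) (η : ⋀[ℚ]^3 H), SL (w u) η = - S (c η) u := by
    intro u
    have := ppr_ext3 (SL (w u)) (-((S.flip u).comp c)) ?_
    · intro η
      have h := this η
      simpa using h
    · intro x y z
      simp only [LinearMap.neg_apply, LinearMap.flip_apply, LinearMap.comp_apply]
      rw [hw, map_sum, hc]
      simp only [LinearMap.coe_sum, Finset.sum_apply]
      simp only [map_add, map_smul, LinearMap.add_apply, LinearMap.smul_apply, smul_eq_mul]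
      simp only [hSL, Matrix.det_fin_three, Matrix.of_apply, Matrix.cons_val_zero,
        Matrix.cons_val_one, Matrix.head_cons, Matrix.cons_val_two, Matrix.tail_cons]
      rw [neg_add, neg_add, ← hK y z, ← hK z x, ← hK x y, Finset.sum_mul, Finset.sum_mul,
        Finset.sum_mul, ← Finset.sum_neg_distrib, ← Finset.sum_neg_distrib,
        ← Finset.sum_neg_distrib, ← Finset.sum_add_distrib, ← Finset.sum_add_distrib]
      refine Finset.sum_congr rfl fun j _ => ?_
      rw [hskew (a j) x, hskew (a j) y, hskew (a j) z, hskew (b j) x, hskew (b j) y,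
        hskew (b j) z, hskew u x, hskew u y, hskew u z]
      ring
  intro ξ η
  rw [hjm, hjm]
  simp only [map_sub, map_smul, LinearMap.sub_apply, LinearMap.smul_apply, smul_eq_mul]
  rw [hA1 (c η) ξ, hA2 (c ξ) η, hA1 (c η) (w (c ξ)), hA3 (c ξ)]
  rw [map_smul, LinearMap.smul_apply, smul_eq_mul]
  rw [hskew (c η) (c ξ)]
  have ht : ((g : ℚ) - 1)⁻¹ * ((g : ℚ) - 1) = 1 := inv_mul_cancel₀ hG
  field_simp
  ring
end
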